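/- For t = (t_k)_{k∈ℤ} with (t_k − k) ∈ ℓ², the linear operator U_t on L²([-π,π]; dx/2π) determined by U_t(e^{ikx}) = e^{it_k x} satisfies: U_t − I is Hilbert–Schmidt, and for any two such sequences s, t one has ‖U_t − U_s‖_{HS} ≤ (2π/√3) ‖t − s‖_{ℓ²}. -/

import Mathlib

/-!
For `e_a = e^{iax}` the pointwise bound `|e^{iθ} - 1| ≤ |θ|` gives `|e_a - e_b| ≤ π |a - b|` on
`[-π, π]`, hence `‖e_a - e_b‖₂ ≤ π |a - b|`; since `π ≤ 2π/√3`, summing the squares over `k` gives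
both the Hilbert–Schmidt property and the estimate. As `⟪e_a, e_b⟫ = sinc((b - a)π)`, the `e_k`,
`k ∈ ℤ`, are orthonormal, so `U_t = I + K` with `K x = ∑ₖ ⟪e_k, x⟫ (e_{t_k} - e_k)`, which by
Cauchy–Schwarz is bounded by `(∑ₖ ‖e_{t_k} - e_k‖²)^{1/2}`.
-/

open MeasureTheory Real
open scoped NNReal

/-- The normalized measure `dx/(2π)` on `[-π, π]`. -/
noncomputable def μπ : Measure ℝ :=
  ((1 / (2 * Real.pi)).toNNReal : ℝ≥0) • (volume.restrict (Set.Icc (-Real.pi) Real.pi))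

instance : IsFiniteMeasure μπ := by
  unfold μπ; infer_instance

lemma memLp_fexp (a : ℝ) :
    MemLp (fun x : ℝ => Complex.exp (Complex.I * ((a : ℂ) * (x : ℂ)))) 2 μπ := by
  refine MemLp.of_bound ?_ 1 ?_
  · exact (Complex.continuous_exp.comp (by continuity)).aestronglyMeasurable
  · filter_upwards with x
    have h : (Complex.I * ((a : ℂ) * (x : ℂ))).re = 0 := by simp
    rw [Complex.norm_exp, h, Real.exp_zero]

/-- The element `e^{iax}` of `L²([-π,π]; dx/(2π))`; for `a = k ∈ ℤ` these form the
standard exponential orthonormal basis. -/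
noncomputable def fexp (a : ℝ) : Lp ℂ 2 μπ := (memLp_fexp a).toLp _

open scoped InnerProductSpace

lemma μπ_univ : μπ Set.univ = 1 := by
  rw [μπ, Measure.smul_apply, Measure.restrict_apply_univ, Real.volume_Icc, ENNReal.smul_def,
    smul_eq_mul, ENNReal.ofNNReal_toNNReal, ← ENNReal.ofReal_mul (by positivity),
    show 1 / (2 * π) * (π - -π) = 1 by field_simp; ring, ENNReal.ofReal_one]

instance : IsProbabilityMeasure μπ := ⟨μπ_univ⟩

lemma integral_μπ (f : ℝ → ℂ) : ∫ x, f x ∂μπ = (2 * π)⁻¹ • ∫ x in -π..π, f x := by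
  rw [μπ, integral_smul_nnreal_measure, intervalIntegral.integral_of_le (by linarith [pi_pos]),
    integral_Icc_eq_integral_Ioc, NNReal.smul_def, one_div, Real.coe_toNNReal _ (by positivity)]

lemma integral_cexp_I_mul_μπ (a : ℝ) :
    ∫ x, Complex.exp (Complex.I * (a * x)) ∂μπ = Real.sinc (a * π) := by
  rw [integral_μπ]
  rcases eq_or_ne a 0 with rfl | ha
  · simp [← two_mul, mul_assoc, pi_ne_zero]
  have hsub := intervalIntegral.integral_comp_mul_left
    (fun t : ℝ => Complex.exp (t * Complex.I)) (a := -π) (b := π) ha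
  rw [mul_neg, integral_exp_mul_I_eq_sin] at hsub
  simp only [Complex.ofReal_mul, mul_comm _ Complex.I] at hsub
  rw [hsub, Real.sinc_of_ne_zero (mul_ne_zero ha pi_ne_zero), Complex.real_smul,
    Complex.real_smul]
  push_cast
  field_simp

lemma inner_fexp_fexp (a b : ℝ) : ⟪fexp a, fexp b⟫_ℂ = Real.sinc ((b - a) * π) := by
  rw [← integral_cexp_I_mul_μπ, L2.inner_def]
  refine integral_congr_ae ?_
  filter_upwards [(memLp_fexp a).coeFn_toLp, (memLp_fexp b).coeFn_toLp] with x ha hb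
  rw [fexp, fexp, ha, hb, RCLike.inner_apply, ← Complex.exp_conj, ← Complex.exp_add]
  simp only [map_mul, Complex.conj_I, Complex.conj_ofReal]
  push_cast
  ring_nf

lemma orthonormal_fexp : Orthonormal ℂ (fun k : ℤ => fexp k) := by
  refine orthonormal_iff_ite.mpr fun j k => ?_
  rw [inner_fexp_fexp, ← Int.cast_sub]
  rcases eq_or_ne j k with rfl | hjk
  · simp
  · rw [if_neg hjk, Real.sinc_of_ne_zero (mul_ne_zero (by exact_mod_cast sub_ne_zero.mpr hjk.symm)
      pi_ne_zero), Real.sin_int_mul_pi, zero_div, Complex.ofReal_zero]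

lemma norm_fexp_sub_le (a b : ℝ) : ‖fexp a - fexp b‖ ≤ π * |a - b| := by
  rw [fexp, fexp, ← MemLp.toLp_sub]
  refine (Lp.norm_le_of_ae_bound (C := π * |a - b|) (by positivity) ?_).trans_eq
    (by simp [measureUnivNNReal])
  filter_upwards [((memLp_fexp a).sub (memLp_fexp b)).coeFn_toLp,
    Measure.ae_smul_measure (ae_restrict_mem measurableSet_Icc) _]
    with x hx hxπ
  have hfactor : Complex.exp (Complex.I * (a * x)) - Complex.exp (Complex.I * (b * x)) =
      Complex.exp (Complex.I * (b * x : ℝ)) * (Complex.exp (Complex.I * ((a - b) * x : ℝ)) - 1) := by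
    rw [mul_sub, mul_one, ← Complex.exp_add]
    push_cast
    ring_nf
  rw [hx, Pi.sub_apply, hfactor, norm_mul, Complex.norm_exp_I_mul_ofReal, one_mul]
  calc _ ≤ ‖(a - b) * x‖ := Real.norm_exp_I_mul_ofReal_sub_one_le
    _ ≤ π * |a - b| := by
      rw [Real.norm_eq_abs, abs_mul, mul_comm]
      exact mul_le_mul_of_nonneg_right (abs_le.mpr hxπ) (abs_nonneg _)

section CauchySchwarz

variable {ι : Type*} {f g : ι → ℝ}

lemma summable_mul_of_summable_sq (hf : Summable fun i => f i ^ 2)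
    (hg : Summable fun i => g i ^ 2) : Summable fun i => f i * g i :=
  ((hf.add hg).div_const 2).of_norm_bounded fun i => by
    rw [Real.norm_eq_abs, abs_mul]
    nlinarith [sq_nonneg (|f i| - |g i|), sq_abs (f i), sq_abs (g i)]

lemma tsum_mul_le_sqrt_mul_sqrt (hf : Summable fun i => f i ^ 2)
    (hg : Summable fun i => g i ^ 2) :
    ∑' i, f i * g i ≤ √(∑' i, f i ^ 2) * √(∑' i, g i ^ 2) := by
  refine (summable_mul_of_summable_sq hf hg).tsum_le_of_sum_le fun s => ?_
  refine (Real.sum_mul_le_sqrt_mul_sqrt s f g).trans ?_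
  gcongr
  · exact hf.sum_le_tsum s fun i _ => sq_nonneg _
  · exact hg.sum_le_tsum s fun i _ => sq_nonneg _

end CauchySchwarz

namespace Orthonormal

variable {𝕜 ι H : Type*} [RCLike 𝕜] [NormedAddCommGroup H] [InnerProductSpace 𝕜 H]
  {e : ι → H} (he : Orthonormal 𝕜 e) {d : ι → H}
  (hd : Summable fun i => ‖d i‖ ^ 2)
include he hd

lemma summable_norm_inner_smul (x : H) : Summable fun i => ‖⟪e i, x⟫_𝕜 • d i‖ := by
  simpa only [norm_smul] using summable_mul_of_summable_sq (he.inner_products_summable x) hd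

lemma norm_tsum_inner_smul_le (x : H) :
    ‖∑' i, ⟪e i, x⟫_𝕜 • d i‖ ≤ √(∑' i, ‖d i‖ ^ 2) * ‖x‖ :=
  calc ‖∑' i, ⟪e i, x⟫_𝕜 • d i‖ ≤ ∑' i, ‖⟪e i, x⟫_𝕜‖ * ‖d i‖ := by
        simpa only [norm_smul] using norm_tsum_le_tsum_norm (he.summable_norm_inner_smul hd x)
    _ ≤ √(∑' i, ‖⟪e i, x⟫_𝕜‖ ^ 2) * √(∑' i, ‖d i‖ ^ 2) :=
        tsum_mul_le_sqrt_mul_sqrt (he.inner_products_summable x) hd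
    _ ≤ √(‖x‖ ^ 2) * √(∑' i, ‖d i‖ ^ 2) := by
        gcongr
        exact he.tsum_inner_products_le x
    _ = √(∑' i, ‖d i‖ ^ 2) * ‖x‖ := by rw [Real.sqrt_sq (norm_nonneg x), mul_comm]

lemma exists_continuousLinearMap_apply_eq [CompleteSpace H] :
    ∃ K : H →L[𝕜] H, ∀ i, K (e i) = d i := by
  have hsum (x : H) := (he.summable_norm_inner_smul hd x).of_norm
  let K : H →ₗ[𝕜] H :=
    { toFun := fun x => ∑' i, ⟪e i, x⟫_𝕜 • d i
      map_add' := fun x y => by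
        simp only [inner_add_right, add_smul]
        exact (hsum x).tsum_add (hsum y)
      map_smul' := fun c x => by
        simp only [inner_smul_right, mul_smul, RingHom.id_apply]
        exact (hsum x).tsum_const_smul c }
  refine ⟨K.mkContinuous _ (he.norm_tsum_inner_smul_le hd), fun i => ?_⟩
  change ∑' j, ⟪e j, e i⟫_𝕜 • d j = d i
  rw [tsum_eq_single i fun j hj => by rw [he.inner_eq_zero hj, zero_smul],
    inner_self_eq_norm_sq_to_K, he.1 i]
  simp

end Orthonormal

section HilbertSchmidt

variable {ι : Type*} {u v : ι → ℝ}

lemma norm_fexp_sub_sq_le (a b : ℝ) : ‖fexp a - fexp b‖ ^ 2 ≤ π ^ 2 * (a - b) ^ 2 := by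
  rw [← sq_abs (a - b), ← mul_pow]
  gcongr
  exact norm_fexp_sub_le a b

lemma summable_norm_fexp_sub_sq (h : Summable fun i => (u i - v i) ^ 2) :
    Summable fun i => ‖fexp (u i) - fexp (v i)‖ ^ 2 :=
  (h.mul_left (π ^ 2)).of_nonneg_of_le (fun _ => sq_nonneg _)
    fun i => norm_fexp_sub_sq_le (u i) (v i)

lemma sqrt_tsum_norm_fexp_sub_sq_le (h : Summable fun i => (u i - v i) ^ 2) :
    √(∑' i, ‖fexp (u i) - fexp (v i)‖ ^ 2) ≤ π * √(∑' i, (u i - v i) ^ 2) := by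
  rw [← Real.sqrt_sq pi_pos.le, ← Real.sqrt_mul (sq_nonneg π), ← tsum_mul_left]
  exact Real.sqrt_le_sqrt <| (summable_norm_fexp_sub_sq h).tsum_le_tsum
    (fun i => norm_fexp_sub_sq_le (u i) (v i)) (h.mul_left _)

end HilbertSchmidt

lemma pi_le_two_mul_pi_div_sqrt_three : π ≤ 2 * π / √3 := by
  rw [le_div_iff₀ (by positivity), mul_comm]
  gcongr
  exact Real.sqrt_le_iff.mpr ⟨by norm_num, by norm_num⟩

/-- For `t = (t_k)` with `(t_k − k) ∈ ℓ²`, the operator `U_t` on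
`L²([-π,π]; dx/2π)` determined by `U_t e^{ikx} = e^{i t_k x}` exists, `U_t − I` is
Hilbert–Schmidt (i.e. `∑_k ‖U_t e_k − e_k‖² < ∞` over the exponential orthonormal basis),
and `‖U_t − U_s‖_{HS} ≤ (2π/√3) ‖t − s‖_{ℓ²}`. -/
theorem stmt5 (t s : ℤ → ℝ)
    (ht : Summable fun k : ℤ => (t k - (k : ℝ)) ^ 2)
    (hs : Summable fun k : ℤ => (s k - (k : ℝ)) ^ 2) :
    (∃ U : Lp ℂ 2 μπ →L[ℂ] Lp ℂ 2 μπ,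
      (∀ k : ℤ, U (fexp (k : ℝ)) = fexp (t k)) ∧
      Summable (fun k : ℤ => ‖fexp (t k) - fexp (k : ℝ)‖ ^ 2)) ∧
    Real.sqrt (∑' k : ℤ, ‖fexp (t k) - fexp (s k)‖ ^ 2) ≤
      (2 * Real.pi / Real.sqrt 3) * Real.sqrt (∑' k : ℤ, (t k - s k) ^ 2) := by
  have hts : Summable fun k : ℤ => (t k - s k) ^ 2 :=
    ((ht.add hs).mul_left 2).of_nonneg_of_le (fun _ => sq_nonneg _) fun k => by
      nlinarith [sq_nonneg (t k + s k - 2 * k)]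
  refine ⟨?_, ?_⟩
  · have hd := summable_norm_fexp_sub_sq (u := t) (v := fun k : ℤ => (k : ℝ)) ht
    obtain ⟨K, hK⟩ := orthonormal_fexp.exists_continuousLinearMap_apply_eq hd
    exact ⟨1 + K, fun k => by simp [hK], hd⟩
  · calc _ ≤ π * √(∑' k : ℤ, (t k - s k) ^ 2) := sqrt_tsum_norm_fexp_sub_sq_le hts
      _ ≤ _ := by gcongr; exact pi_le_two_mul_pi_div_sqrt_three
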